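/- Let $Q$ be a ring satisfying the ascending chain condition on right annihilators and on left annihilators, in which every right ideal has the form $eQ + K$ with $e$ an idempotent and $K$ a nil right ideal. Then $Q$ is semiprimary. -/

import Mathlib

/-- The right annihilator of a subset `X` of a ring. -/
def rAnnSet (R : Type*) [Ring R] (X : Set R) : Set R := {r | ∀ x ∈ X, x * r = 0}

/-- The left annihilator of a subset `X` of a ring. -/
def lAnnSet (R : Type*) [Ring R] (X : Set R) : Set R := {r | ∀ x ∈ X, r * x = 0}

/-- A ring satisfies the ascending chain condition on right annihilators. -/
def ACCRightAnnihilators (R : Type*) [Ring R] : Prop :=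
  ∀ f : ℕ → Set R, (∀ n, ∃ X, f n = rAnnSet R X) → Monotone f →
    ∃ N, ∀ n, N ≤ n → f n = f N

/-- A ring satisfies the ascending chain condition on left annihilators. -/
def ACCLeftAnnihilators (R : Type*) [Ring R] : Prop :=
  ∀ f : ℕ → Set R, (∀ n, ∃ X, f n = lAnnSet R X) → Monotone f →
    ∃ N, ∀ n, N ≤ n → f n = f N

/-- A subset of a ring is a right ideal. -/
def IsRightIdealSet (R : Type*) [Ring R] (I : Set R) : Prop :=
  (0 : R) ∈ I ∧ (∀ a ∈ I, ∀ b ∈ I, a + b ∈ I) ∧ (∀ a ∈ I, -a ∈ I) ∧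
    ∀ a ∈ I, ∀ r : R, a * r ∈ I

/-- A ring is semiprimary if its Jacobson radical `J` is nilpotent and `R/J` is
semisimple Artinian. -/
def IsSemiprimaryRing' (R : Type*) [Ring R] : Prop :=
  (∃ n : ℕ, ∀ x : Fin n → R, (∀ i, x i ∈ (⊥ : TwoSidedIdeal R).jacobson) →
      (List.ofFn x).prod = 0) ∧
    IsSemisimpleRing ((⊥ : TwoSidedIdeal R).jacobson).ringCon.Quotient

/-!
Applied to a principal right ideal `xQ`, the hypothesis yields an idempotent `e ∈ xQ` with
`x ∈ eQ + K`, `K` nil. For `x` in the Jacobson radical `J` this forces `e = 0`, so `J` is nil;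
modulo `J` it makes `Q/J` von Neumann regular. Lifting idempotents along the nil ideal `J`, ACC on
right annihilators of `Q` shows that every left ideal of `Q/J` is generated by an idempotent, so
`Q/J` is semisimple. Finally `J` is nilpotent: if `l(J^m) = l(J^(m+1))` but `J^m ≠ 0`, pick `c` with
`cJ^m ≠ 0` and `r(cQ)` maximal, then `a ∈ J` with `caJ^m ≠ 0` and `l(aJ^m)` maximal; as `J` is
nil, this forces `caQaJ^m = 0`, which contradicts the maximality of `r(cQ)`.
-/

theorem exists_maximal_of_monotone_stabilizes {α ι : Type*} {A : Set (Set α)}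
    (hA : ∀ f : ℕ → Set α, (∀ n, f n ∈ A) → Monotone f → ∃ N, ∀ n, N ≤ n → f n = f N)
    (f : ι → Set α) (hf : ∀ i, f i ∈ A) (i₀ : ι) :
    ∃ i, ∀ j, f i ⊆ f j → f j = f i := by
  by_contra! h
  choose next hle hne using h
  have hmono : Monotone fun n => f (next^[n] i₀) :=
    monotone_nat_of_le_succ fun n => by
      simpa only [Function.iterate_succ_apply'] using hle _
  obtain ⟨N, hN⟩ := hA _ (fun n => hf _) hmono
  exact hne _ (by simpa only [Function.iterate_succ_apply'] using hN (N + 1) N.le_succ)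

section Annihilators

variable {Q : Type*} [Ring Q]

theorem ACCRightAnnihilators.exists_maximal (h : ACCRightAnnihilators Q) {ι : Type*}
    (X : ι → Set Q) (i₀ : ι) :
    ∃ i, ∀ j, rAnnSet Q (X i) ⊆ rAnnSet Q (X j) → rAnnSet Q (X j) = rAnnSet Q (X i) :=
  exists_maximal_of_monotone_stabilizes (A := {S | ∃ X, S = rAnnSet Q X}) h _
    (fun i => ⟨X i, rfl⟩) i₀

theorem ACCLeftAnnihilators.exists_maximal (h : ACCLeftAnnihilators Q) {ι : Type*}
    (X : ι → Set Q) (i₀ : ι) :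
    ∃ i, ∀ j, lAnnSet Q (X i) ⊆ lAnnSet Q (X j) → lAnnSet Q (X j) = lAnnSet Q (X i) :=
  exists_maximal_of_monotone_stabilizes (A := {S | ∃ X, S = lAnnSet Q X}) h _
    (fun i => ⟨X i, rfl⟩) i₀

theorem mem_rAnnSet_singleton {a z : Q} : z ∈ rAnnSet Q {a} ↔ a * z = 0 := by
  simp [rAnnSet]

theorem mem_lAnnSet_image_mul {x z : Q} {P : Set Q} :
    z ∈ lAnnSet Q ((x * ·) '' P) ↔ ∀ t ∈ P, z * (x * t) = 0 := by
  simp [lAnnSet]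

theorem mem_rAnnSet_range_mul {c z : Q} :
    z ∈ rAnnSet Q (Set.range (c * ·)) ↔ ∀ q, c * q * z = 0 := by
  simp [rAnnSet]

end Annihilators

section Jacobson

variable {Q : Type*} [Ring Q]

theorem isNilpotent_mul_comm {a b : Q} (h : IsNilpotent (a * b)) : IsNilpotent (b * a) := by
  obtain ⟨n, hn⟩ := h
  exact ⟨n + 1, by rw [pow_succ', mul_assoc, ← mul_pow_mul, hn, zero_mul, mul_zero]⟩

theorem TwoSidedIdeal.mem_jacobson_bot_of_forall_isNilpotent_mul {x : Q}
    (hx : ∀ r, IsNilpotent (x * r)) : x ∈ (⊥ : TwoSidedIdeal Q).jacobson := by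
  refine TwoSidedIdeal.mem_jacobson_iff.mpr fun y => ?_
  obtain ⟨u, hu⟩ := (isNilpotent_mul_comm (hx y)).isUnit_one_add
  refine ⟨↑u⁻¹, (TwoSidedIdeal.mem_bot Q).mpr ?_⟩
  calc ↑u⁻¹ * y * x + ↑u⁻¹ - 1 = ↑u⁻¹ * (1 + y * x) - 1 := by noncomm_ring
    _ = 0 := by rw [← hu, u.inv_mul, sub_self]

theorem IsIdempotentElem.eq_zero_of_mem_jacobson_bot {e : Q} (he : IsIdempotentElem e)
    (heJ : e ∈ (⊥ : TwoSidedIdeal Q).jacobson) : e = 0 := by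
  obtain ⟨z, hz⟩ := TwoSidedIdeal.mem_jacobson_iff.mp heJ (-1)
  have hz' : z * (1 - e) = 1 := by
    rw [TwoSidedIdeal.mem_bot, sub_eq_zero] at hz
    calc z * (1 - e) = z * -1 * e + z := by noncomm_ring
      _ = 1 := hz
  calc e = z * (1 - e) * e := by rw [hz', one_mul]
    _ = 0 := by rw [mul_assoc, sub_mul, one_mul, he.eq, sub_self, mul_zero]

theorem isRightIdealSet_range_mul (x : Q) : IsRightIdealSet Q (Set.range (x * ·)) :=
  ⟨⟨0, mul_zero x⟩, by rintro _ ⟨a, rfl⟩ _ ⟨b, rfl⟩; exact ⟨a + b, mul_add x a b⟩,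
    by rintro _ ⟨a, rfl⟩; exact ⟨-a, mul_neg x a⟩,
    by rintro _ ⟨a, rfl⟩ r; exact ⟨a * r, (mul_assoc x a r).symm⟩⟩

theorem TwoSidedIdeal.ringCon_mk'_eq_zero_iff (I : TwoSidedIdeal Q) {x : Q} :
    I.ringCon.mk' x = 0 ↔ x ∈ I := by
  rw [← mem_ker, ker_ringCon_mk']

variable (Q) in
def HasIdempotentAddNilRightIdeals : Prop :=
  ∀ I : Set Q, IsRightIdealSet Q I →
    ∃ (e : Q) (K : Set Q), e * e = e ∧ IsRightIdealSet Q K ∧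
      (∀ x ∈ K, IsNilpotent x) ∧ I = {y | ∃ q : Q, ∃ x ∈ K, y = e * q + x}

namespace HasIdempotentAddNilRightIdeals

variable (h : HasIdempotentAddNilRightIdeals Q)
include h

theorem exists_mul_add (x : Q) :
    ∃ u q k, IsIdempotentElem (x * u) ∧ x = x * u * q + k ∧ ∀ r, IsNilpotent (k * r) := by
  obtain ⟨e, K, he, hK, hKnil, hxQ⟩ := h (Set.range (x * ·)) (isRightIdealSet_range_mul x)
  obtain ⟨u, rfl⟩ : e ∈ Set.range (x * ·) := hxQ ▸ ⟨e, 0, hK.1, by rw [he, add_zero]⟩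
  obtain ⟨q, k, hk, hx⟩ : x ∈ {y | ∃ q : Q, ∃ k ∈ K, y = x * u * q + k} := hxQ ▸ ⟨1, mul_one x⟩
  exact ⟨u, q, k, he, hx, fun r => hKnil _ (hK.2.2.2 k hk r)⟩

theorem isNilpotent_of_mem_jacobson {x : Q} (hx : x ∈ (⊥ : TwoSidedIdeal Q).jacobson) :
    IsNilpotent x := by
  obtain ⟨u, q, k, he, hxk, hk⟩ := h.exists_mul_add x
  rw [he.eq_zero_of_mem_jacobson_bot (TwoSidedIdeal.mul_mem_right _ x u hx), zero_mul,
    zero_add] at hxk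
  simpa [hxk] using hk 1

theorem exists_mul_mul_eq_self (x : (⊥ : TwoSidedIdeal Q).jacobson.ringCon.Quotient) :
    ∃ u, x * u * x = x := by
  set π := (⊥ : TwoSidedIdeal Q).jacobson.ringCon.mk'
  obtain ⟨x, rfl⟩ := RingCon.mk'_surjective _ x
  obtain ⟨u, q, k, he, hxk, hk⟩ := h.exists_mul_add x
  have hk0 : π k = 0 := (TwoSidedIdeal.ringCon_mk'_eq_zero_iff _).mpr
    (TwoSidedIdeal.mem_jacobson_bot_of_forall_isNilpotent_mul hk)
  have hπx : π x = π (x * u) * π q := by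
    conv_lhs => rw [hxk]
    rw [map_add, hk0, add_zero, map_mul]
  refine ⟨π u, ?_⟩
  rw [← map_mul, hπx, ← mul_assoc, ← map_mul, he.eq]

end HasIdempotentAddNilRightIdeals

end Jacobson

section Semisimple

variable {R S : Type*} [Ring R] [Ring S]

theorem IsSemisimpleRing.of_forall_eq_span_idempotent
    (h : ∀ L : Submodule S S, ∃ e, IsIdempotentElem e ∧ Submodule.span S {e} = L) :
    IsSemisimpleRing S := by
  refine (isSemisimpleModule_iff S S).mpr ⟨fun L => ?_⟩
  obtain ⟨e, he, rfl⟩ := h L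
  have hp : IsIdempotentElem (LinearMap.toSpanSingleton S S e) :=
    LinearMap.ext fun x => by simp [mul_assoc, he.eq]
  exact ⟨_, LinearMap.span_singleton_eq_range S S e ▸ LinearMap.IsIdempotentElem.isCompl hp⟩

theorem exists_isIdempotentElem_orthogonal_of_notMem_span (hreg : ∀ x : S, ∃ u, x * u * x = x)
    {L : Submodule S S} {e x : S} (he : IsIdempotentElem e) (heL : e ∈ L) (hxL : x ∈ L)
    (hx : x ∉ Submodule.span S {e}) :
    ∃ g ∈ L, IsIdempotentElem g ∧ g ≠ 0 ∧ e * g = 0 ∧ g * e = 0 := by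
  obtain ⟨y, hyL, hye, hy0⟩ : ∃ y ∈ L, y * e = 0 ∧ y ≠ 0 :=
    ⟨x - x * e, L.sub_mem hxL (L.smul_mem x heL), by rw [sub_mul, mul_assoc, he.eq, sub_self],
      fun h0 => hx (Submodule.mem_span_singleton.mpr ⟨x, (sub_eq_zero.mp h0).symm⟩)⟩
  obtain ⟨v, hv⟩ := hreg y
  -- `v y` is idempotent with `y (v y) = y`; the factor `1 - e` makes it orthogonal to `e`
  have hvye : v * y * (1 - e) = v * y := by
    rw [mul_sub, mul_one, mul_assoc, hye, mul_zero, sub_zero]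
  refine ⟨(1 - e) * (v * y), ?_, ?_, fun h0 => hy0 ?_, ?_, ?_⟩
  · rw [sub_mul, one_mul]
    exact L.sub_mem (L.smul_mem v hyL) (L.smul_mem e (L.smul_mem v hyL))
  · calc (1 - e) * (v * y) * ((1 - e) * (v * y))
        = (1 - e) * (v * y * (1 - e) * (v * y)) := by simp only [mul_assoc]
      _ = (1 - e) * (v * (y * v * y)) := by rw [hvye]; simp only [mul_assoc]
      _ = (1 - e) * (v * y) := by rw [hv]
  · calc y = y * (v * y) := by rw [← mul_assoc, hv]
      _ = y * ((1 - e) * (v * y)) := by rw [← mul_assoc y (1 - e), mul_sub, mul_one, hye, sub_zero]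
      _ = 0 := by rw [h0, mul_zero]
  · rw [← mul_assoc, mul_sub, mul_one, he.eq, sub_self, zero_mul]
  · rw [mul_assoc, mul_assoc, hye, mul_zero, mul_zero]

theorem IsSemisimpleRing.of_surjective_of_isNilpotent_ker (haccr : ACCRightAnnihilators R)
    (f : R →+* S) (hf : Function.Surjective f) (hker : ∀ x ∈ RingHom.ker f, IsNilpotent x)
    (hreg : ∀ x : S, ∃ u, x * u * x = x) : IsSemisimpleRing S := by
  refine .of_forall_eq_span_idempotent fun L => ?_
  -- `r(1 - s) = sR`, so this picks an idempotent `s` with `f s ∈ L` and `sR` maximal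
  obtain ⟨⟨s, hs, hsL⟩, hmax⟩ := haccr.exists_maximal
    (fun s : {s : R // IsIdempotentElem s ∧ f s ∈ L} => {1 - s.1}) ⟨0, .zero, by simp⟩
  refine ⟨f s, hs.map f, le_antisymm ((Submodule.span_singleton_le_iff_mem _ _).mpr hsL)
    fun x hxL => ?_⟩
  by_contra hx
  obtain ⟨g, hgL, hg, hg0, hsg, hgs⟩ :=
    exists_isIdempotentElem_orthogonal_of_notMem_span hreg (hs.map f) hsL hxL hx
  obtain ⟨g', hg', rfl, hg's, hsg'⟩ :=
    exists_isIdempotentElem_mul_eq_zero_of_ker_isNilpotent f hker g (hf g) hg s hs hgs hsg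
  have hss' : IsIdempotentElem (s + g') := by
    rw [IsIdempotentElem, add_mul, mul_add, mul_add, hs.eq, hg'.eq, hsg', hg's, add_zero, zero_add]
  have hrAnn := hmax ⟨s + g', hss', by rw [map_add]; exact L.add_mem hsL hgL⟩ fun z hz => by
    rw [mem_rAnnSet_singleton] at hz ⊢
    have hsz : s * z = z := by rwa [sub_mul, one_mul, sub_eq_zero, eq_comm] at hz
    calc (1 - (s + g')) * z = (1 - s) * z - g' * (s * z) := by rw [hsz]; noncomm_ring
      _ = 0 := by rw [hz, ← mul_assoc, hg's, zero_mul, sub_zero]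
  have hg'_mem : g' ∈ rAnnSet R {1 - (s + g')} := mem_rAnnSet_singleton.mpr <| by
    rw [sub_mul, one_mul, add_mul, hsg', hg'.eq, zero_add, sub_self]
  rw [hrAnn, mem_rAnnSet_singleton, sub_mul, one_mul, hsg', sub_zero] at hg'_mem
  exact hg0 (by rw [hg'_mem, map_zero])

end Semisimple

open Pointwise

section NilIdeal

variable {Q : Type*} [Ring Q]

theorem TwoSidedIdeal.mul_mem_pow_succ (I : TwoSidedIdeal Q) {n : ℕ} (q : Q) {t : Q}
    (ht : t ∈ (I : Set Q) ^ (n + 1)) : q * t ∈ (I : Set Q) ^ (n + 1) := by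
  rw [pow_succ', Set.mem_mul] at ht ⊢
  obtain ⟨j, hj, s, hs, rfl⟩ := ht
  exact ⟨q * j, I.mul_mem_left q j hj, s, hs, mul_assoc q j s⟩

theorem TwoSidedIdeal.monotone_lAnnSet_pow (I : TwoSidedIdeal Q) :
    Monotone fun n => lAnnSet Q ((I : Set Q) ^ n) := by
  refine monotone_nat_of_le_succ fun n z hz s hs => ?_
  rw [pow_succ, Set.mem_mul] at hs
  obtain ⟨p, hp, j, -, rfl⟩ := hs
  rw [← mul_assoc, hz p hp, zero_mul]

theorem exists_mul_ne_zero_and_mul_mul_eq_zero (haccl : ACCLeftAnnihilators Q) {I P : Set Q}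
    (hI : ∀ a ∈ I, ∀ r, a * r ∈ I) (hnil : ∀ a ∈ I, IsNilpotent a)
    (hP : ∀ q, ∀ t ∈ P, q * t ∈ P) {c : Q} (hc : ∃ x ∈ I, ∃ t ∈ P, c * x * t ≠ 0) :
    ∃ a, (∃ t ∈ P, c * a * t ≠ 0) ∧ ∀ q, ∀ t ∈ P, c * a * q * a * t = 0 := by
  let E := {x ∈ I | ∃ t ∈ P, c * x * t ≠ 0}
  obtain ⟨x₀, hx₀⟩ := hc
  obtain ⟨⟨a, haI, hac⟩, hmax⟩ := haccl.exists_maximal (fun x : E => (x.1 * ·) '' P) ⟨x₀, hx₀⟩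
  refine ⟨a, hac, fun q t' ht' => ?_⟩
  let x : ℕ → Q := fun k => a * (q * a) ^ k
  obtain ⟨n, hn⟩ := hnil _ (hI a haI q)
  have hxn : x n ∉ E := fun ⟨_, t, _, ht⟩ => ht (by simp [x, ← mul_pow_mul, hn])
  obtain ⟨k, hk, hk'⟩ : ∃ k, x k ∈ E ∧ x (k + 1) ∉ E := by
    by_contra! hcon
    exact hxn (Nat.rec (by rw [show x 0 = a by simp [x]]; exact ⟨haI, hac⟩) hcon n)
  have hlAnn : lAnnSet Q ((x k * ·) '' P) = lAnnSet Q ((a * ·) '' P) := by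
    refine hmax ⟨x k, hk⟩ fun z hz => mem_lAnnSet_image_mul.mpr fun t ht => ?_
    rw [mul_assoc a, mem_lAnnSet_image_mul.mp hz _ (hP _ t ht)]
  have hcaq : c * a * q ∈ lAnnSet Q ((x k * ·) '' P) := by
    refine mem_lAnnSet_image_mul.mpr fun t ht => ?_
    by_contra hne
    exact hk' ⟨hI a haI _, t, ht, by simpa [x, pow_succ', mul_assoc] using hne⟩
  rw [hlAnn, mem_lAnnSet_image_mul] at hcaq
  simpa [mul_assoc] using hcaq t' ht'

theorem TwoSidedIdeal.exists_pow_eq_zero_of_isNilpotent (haccr : ACCRightAnnihilators Q)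
    (haccl : ACCLeftAnnihilators Q) (I : TwoSidedIdeal Q) (hnil : ∀ x ∈ I, IsNilpotent x) :
    ∃ n, ∀ t ∈ (I : Set Q) ^ n, t = 0 := by
  obtain ⟨N, hN⟩ := haccl _ (fun n => ⟨_, rfl⟩) I.monotone_lAnnSet_pow
  let P := (I : Set Q) ^ (N + 1)
  have hstab : ∀ c, (∃ t ∈ P, c * t ≠ 0) → ∃ x ∈ I, ∃ t ∈ P, c * x * t ≠ 0 := by
    intro c ⟨t, ht, hne⟩
    have hc : c ∉ lAnnSet Q ((I : Set Q) ^ (N + 2)) := by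
      rw [hN _ (by omega), ← hN (N + 1) (by omega)]
      exact fun hcP => hne (hcP t ht)
    obtain ⟨s, hs, hcs⟩ : ∃ s ∈ (I : Set Q) ^ (N + 2), c * s ≠ 0 := by simpa [lAnnSet] using hc
    obtain ⟨x, hx, t, ht, rfl⟩ := Set.mem_mul.mp (pow_succ' (I : Set Q) (N + 1) ▸ hs)
    exact ⟨x, hx, t, ht, by rwa [mul_assoc]⟩
  refine ⟨N + 1, fun t₀ ht₀ => ?_⟩
  by_contra ht₀0
  obtain ⟨⟨c, hc⟩, hmax⟩ := haccr.exists_maximal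
    (fun c : {c : Q // ∃ t ∈ P, c * t ≠ 0} => Set.range (c.1 * ·)) ⟨1, t₀, ht₀, by rwa [one_mul]⟩
  obtain ⟨a, ⟨t, ht, hat⟩, hzero⟩ := exists_mul_ne_zero_and_mul_mul_eq_zero haccl
    (fun a ha r => I.mul_mem_right a r ha) hnil (fun q t ht => I.mul_mem_pow_succ q ht) (hstab c hc)
  have hrAnn : rAnnSet Q (Set.range (c * a * ·)) = rAnnSet Q (Set.range (c * ·)) := by
    refine hmax ⟨c * a, t, ht, hat⟩ fun z hz => mem_rAnnSet_range_mul.mpr fun q => ?_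
    rw [mul_assoc c, mem_rAnnSet_range_mul.mp hz]
  have hat_mem : a * t ∈ rAnnSet Q (Set.range (c * a * ·)) :=
    mem_rAnnSet_range_mul.mpr fun q => by rw [← mul_assoc, hzero q t ht]
  rw [hrAnn, mem_rAnnSet_range_mul] at hat_mem
  exact hat (by simpa [mul_assoc] using hat_mem 1)

end NilIdeal

theorem semiprimary_of_right_ideals_eQ_plus_nil {Q : Type*} [Ring Q]
    (haccr : ACCRightAnnihilators Q) (haccl : ACCLeftAnnihilators Q)
    (h : ∀ I : Set Q, IsRightIdealSet Q I →
      ∃ (e : Q) (K : Set Q), e * e = e ∧ IsRightIdealSet Q K ∧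
        (∀ x ∈ K, IsNilpotent x) ∧ I = {y | ∃ q : Q, ∃ x ∈ K, y = e * q + x}) :
    IsSemiprimaryRing' Q := by
  have h : HasIdempotentAddNilRightIdeals Q := h
  obtain ⟨n, hn⟩ := TwoSidedIdeal.exists_pow_eq_zero_of_isNilpotent haccr haccl _
    fun x => h.isNilpotent_of_mem_jacobson
  refine ⟨⟨n, fun x hx => hn _ (Set.mem_pow.mpr ⟨fun i => ⟨x i, hx i⟩, rfl⟩)⟩, ?_⟩
  refine .of_surjective_of_isNilpotent_ker haccr _ (RingCon.mk'_surjective _)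
    (fun x hx => h.isNilpotent_of_mem_jacobson ?_) h.exists_mul_mul_eq_self
  rwa [RingHom.mem_ker, TwoSidedIdeal.ringCon_mk'_eq_zero_iff] at hx
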